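/- Let Ω be an open convex cone in ℝⁿ whose dual cone Ω* has nonempty interior. For each x ∈ Ω the function y ↦ e^{−⟨x,y⟩} is integrable over Ω*, so the characteristic function φ(x) = ∫_{Ω*} e^{−⟨x,y⟩} dy is well defined and finite, and moreover φ(x) > 0. -/

import Mathlib

/-!
Since `x` is interior to `Ω`, a whole ball `closedBall x r` lies in `closure Ω`, and every `y` in
the dual cone is nonnegative on it; testing at `x - (r / ‖y‖) • y` gives `⟪x, y⟫ ≥ r ‖y‖`. Hence
`e^{-⟪x, y⟫} ≤ e^{-r ‖y‖}` on the dual cone, and `e^{-r ‖y‖}` is integrable because it decays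
faster than any power of `1 + ‖y‖`. Positivity follows since the dual cone has nonempty interior,
hence positive measure.
-/

open MeasureTheory Real Metric
open scoped RealInnerProductSpace

lemma exp_neg_mul_le_mul_one_add_rpow_neg (m : ℕ) {c t : ℝ} (hc : 0 < c) (ht : 0 ≤ t) :
    exp (-(c * t)) ≤ m.factorial * exp c / c ^ m * (1 + t) ^ (-(m : ℝ)) := by
  have hpow : (c * (1 + t)) ^ m / m.factorial ≤ exp c * exp (c * t) := by
    rw [← exp_add, show c + c * t = c * (1 + t) by ring]
    exact pow_div_factorial_le_exp _ (by positivity) m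
  rw [rpow_neg (by linarith), rpow_natCast, ← div_eq_mul_inv, le_div_iff₀ (by positivity),
    exp_neg, inv_mul_le_iff₀ (exp_pos _), mul_div_assoc', le_div_iff₀ (by positivity)]
  rw [div_le_iff₀ (by positivity), mul_pow] at hpow
  linarith

section FiniteDimensional

variable {E : Type*} [NormedAddCommGroup E] [NormedSpace ℝ E] [FiniteDimensional ℝ E]
  [MeasurableSpace E] [BorelSpace E] (μ : Measure E) [μ.IsAddHaarMeasure]

lemma integrable_exp_neg_mul_norm {c : ℝ} (hc : 0 < c) :
    Integrable (fun y : E ↦ exp (-(c * ‖y‖))) μ := by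
  set m := Module.finrank ℝ E + 1
  have hdecay : Integrable (fun y : E ↦ (1 + ‖y‖) ^ (-(m : ℝ))) μ :=
    integrable_one_add_norm (by exact_mod_cast (Module.finrank ℝ E).lt_succ_self)
  refine (hdecay.const_mul (m.factorial * exp c / c ^ m)).mono' (by fun_prop) (ae_of_all _ ?_)
  intro y
  rw [norm_of_nonneg (exp_pos _).le]
  exact exp_neg_mul_le_mul_one_add_rpow_neg m hc (norm_nonneg y)

end FiniteDimensional

section InnerProductSpace

variable {E : Type*} [NormedAddCommGroup E] [InnerProductSpace ℝ E]

lemma mul_norm_le_inner_of_forall_closedBall {x y : E} {r : ℝ} (hr : 0 ≤ r)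
    (h : ∀ z ∈ closedBall x r, 0 ≤ ⟪z, y⟫) : r * ‖y‖ ≤ ⟪x, y⟫ := by
  rcases eq_or_ne y 0 with rfl | hy
  · simp
  have hy' : 0 < ‖y‖ := norm_pos_iff.mpr hy
  have hmem : x - (r / ‖y‖) • y ∈ closedBall x r := by
    rw [mem_closedBall, dist_eq_norm, sub_sub_cancel_left, norm_neg, norm_smul, norm_div,
      norm_norm, Real.norm_of_nonneg hr, div_mul_cancel₀ _ hy'.ne']
  have hinner : ⟪x - (r / ‖y‖) • y, y⟫ = ⟪x, y⟫ - r * ‖y‖ := by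
    rw [inner_sub_left, real_inner_smul_left, real_inner_self_eq_norm_sq]
    field_simp
  linarith [h _ hmem]

variable [FiniteDimensional ℝ E] [MeasurableSpace E] [BorelSpace E]
  (μ : Measure E) [μ.IsAddHaarMeasure]

lemma integrableOn_exp_neg_inner_of_mul_norm_le {x : E} {c : ℝ} (hc : 0 < c) {s : Set E}
    (hs : ∀ y ∈ s, c * ‖y‖ ≤ ⟪x, y⟫) : IntegrableOn (fun y ↦ exp (-⟪x, y⟫)) s μ := by
  have hclosed : IsClosed {y : E | c * ‖y‖ ≤ ⟪x, y⟫} :=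
    isClosed_le (by fun_prop) (continuous_const.inner continuous_id)
  refine IntegrableOn.mono_set ?_ hs
  refine ((integrable_exp_neg_mul_norm μ hc).integrableOn).mono' (by fun_prop)
    ((ae_restrict_iff' hclosed.measurableSet).mpr (ae_of_all _ fun y hy ↦ ?_))
  rw [norm_of_nonneg (exp_pos _).le, exp_le_exp, neg_le_neg_iff]
  exact hy

end InnerProductSpace

theorem characteristic_function_integrable_pos_general
    (n : ℕ) (Ω : Set (EuclideanSpace ℝ (Fin n)))
    (hopen : IsOpen Ω)
    (dual : Set (EuclideanSpace ℝ (Fin n)))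
    (hdual : dual = {y | ∀ x ∈ closure Ω, x ≠ 0 → 0 < (inner ℝ x y : ℝ)})
    (hdual_int : (interior dual).Nonempty) :
    ∀ x ∈ Ω,
      IntegrableOn (fun y => Real.exp (-(inner ℝ x y : ℝ))) dual ∧
        0 < ∫ y in dual, Real.exp (-(inner ℝ x y : ℝ)) := by
  intro x hx
  obtain ⟨r, hr, hball⟩ := isOpen_iff.mp hopen x hx
  have hcoercive : ∀ y ∈ dual, r / 2 * ‖y‖ ≤ ⟪x, y⟫ := by
    intro y hy
    refine mul_norm_le_inner_of_forall_closedBall (by positivity) fun z hz ↦ ?_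
    rcases eq_or_ne z 0 with rfl | hz0
    · simp
    rw [hdual] at hy
    exact (hy z (subset_closure (hball (closedBall_subset_ball (half_lt_self hr) hz))) hz0).le
  have hint := integrableOn_exp_neg_inner_of_mul_norm_le volume (half_pos hr) hcoercive
  have hpos : 0 < volume dual :=
    (isOpen_interior.measure_pos volume hdual_int).trans_le (measure_mono interior_subset)
  have : NeZero (volume.restrict dual) := ⟨Measure.restrict_eq_zero.not.mpr hpos.ne'⟩
  exact ⟨hint, integral_exp_pos hint⟩

/-- for an open convex cone Ω whose open dual cone Ω* has nonempty
interior, and any x ∈ Ω, the function y ↦ e^{−⟨x,y⟩} is integrable on Ω*, and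
the characteristic function φ(x) = ∫_{Ω*} e^{−⟨x,y⟩} dy is finite and
strictly positive. -/
theorem characteristic_function_integrable_pos
    (n : ℕ) (Ω : Set (EuclideanSpace ℝ (Fin n)))
    (hopen : IsOpen Ω) (hconv : Convex ℝ Ω)
    (hcone : ∀ c : ℝ, 0 < c → ∀ x ∈ Ω, c • x ∈ Ω)
    (dual : Set (EuclideanSpace ℝ (Fin n)))
    (hdual : dual = {y | ∀ x ∈ closure Ω, x ≠ 0 → 0 < (inner ℝ x y : ℝ)})
    (hdual_int : (interior dual).Nonempty) :
    ∀ x ∈ Ω,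
      IntegrableOn (fun y => Real.exp (-(inner ℝ x y : ℝ))) dual ∧
        0 < ∫ y in dual, Real.exp (-(inner ℝ x y : ℝ)) :=
  characteristic_function_integrable_pos_general n Ω hopen dual hdual hdual_int
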